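/- Define pattern encoding ψ_P : Fin 2 → (Fin 2 → Fin 3) by ψ_P(1) = 22 and ψ_P(0) = 01, and text encoding ψ_T by ψ_T(1) = 11 and ψ_T(0) = 02. For binary strings P, T of length m, the Hamming distance between the concatenated ternary encodings equals m + ⟨P,T⟩, where ⟨P,T⟩ is the inner product over the naturals. Consequently, the Hamming distance modulo 2 of the encoded strings determines the inner product modulo 2: ⟨P,T⟩ mod 2 = (HD + m) mod 2. -/
import Mathlib

/-- Pattern encoding: 1 ↦ 22, 0 ↦ 01. -/
def psiP : Fin 2 → Fin 2 → Fin 3 := fun b k => if b = 1 then 2 else (if k = 1 then 1 else 0)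

/-- Text encoding: 1 ↦ 11, 0 ↦ 02. -/
def psiT : Fin 2 → Fin 2 → Fin 3 := fun b k => if b = 1 then 1 else (if k = 1 then 2 else 0)

lemma card_eq (p t : Fin 2) :
    (Finset.univ.filter (fun k : Fin 2 => psiP p k ≠ psiT t k)).card = 1 + (p : ℕ) * (t : ℕ) := by
  fin_cases p <;> fin_cases t <;> decide

theorem stmt_4 (m : ℕ) (P T : Fin m → Fin 2) :
    (∑ j, (Finset.univ.filter (fun k : Fin 2 => psiP (P j) k ≠ psiT (T j) k)).card) =
        m + ∑ j, ((P j : ℕ) * (T j : ℕ)) ∧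
      (∑ j, ((P j : ℕ) * (T j : ℕ))) % 2 =
        ((∑ j, (Finset.univ.filter (fun k : Fin 2 => psiP (P j) k ≠ psiT (T j) k)).card) + m) % 2 := by
  have h : (∑ j, (Finset.univ.filter (fun k : Fin 2 => psiP (P j) k ≠ psiT (T j) k)).card) =
      m + ∑ j, ((P j : ℕ) * (T j : ℕ)) := by
    simp [card_eq, Finset.sum_add_distrib]
  refine ⟨h, ?_⟩
  rw [h]
  omega
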